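/- Let a clause state with bound n (relative to a CNF I and a trail τ) satisfy Inv1, Inv3, and Inv4. Let γ be an active clause of rank i (either γ ∈ Dᵢ with i ≤ n, or γ ∈ D∞ with i = ∞), and let j ∈ ℕ with j ≤ n and j < i. Then the state obtained by removing γ from its current group and adding it to D_j (promotion of γ to a lower group) satisfies Inv1, Inv2, Inv3, and Inv4. -/

import Mathlib

/-- A variable is a natural number. -/
abbrev Var := ℕ

/-- A literal is a pair of a variable and a Boolean polarity. -/
abbrev Lit := Var × Bool

/-- The negation of a literal flips its polarity. -/
def Lit.neg (l : Lit) : Lit := (l.1, !l.2)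

/-- A clause is a finite set of literals. -/
abbrev Clause := Finset Lit

/-- A total assignment. -/
abbrev Assignment := Var → Bool

/-- A trail is a finite list of (literal, decision level) pairs. -/
abbrev Trail := List (Lit × ℕ)

/-- An assignment satisfies a literal `(v, b)` iff it assigns `b` to `v`. -/
def SatLit (σ : Assignment) (l : Lit) : Prop := σ l.1 = l.2

/-- An assignment satisfies a clause iff it satisfies one of its literals. -/
def SatClause (σ : Assignment) (c : Clause) : Prop := ∃ l ∈ c, SatLit σ l

/-- An assignment satisfies a set of clauses iff it satisfies every clause in it. -/
def SatSet (σ : Assignment) (Γ : Set Clause) : Prop := ∀ c ∈ Γ, SatClause σ c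

/-- Entry `i` of trail `τ` is a decision: its level is positive and
no earlier entry has the same level. -/
def IsDecision (τ : Trail) (i : Fin τ.length) : Prop :=
  0 < (τ.get i).2 ∧ ∀ j : Fin τ.length, j < i → (τ.get j).2 ≠ (τ.get i).2

/-- `τ` is a trail for the input CNF `I`. -/
structure IsTrail (I : Finset Clause) (τ : Trail) : Prop where
  nodupVars : (τ.map (fun e => e.1.1)).Nodup
  levelsMono : (τ.map Prod.snd).Pairwise (· ≤ ·)
  implied : ∀ i : Fin τ.length, ¬ IsDecision τ i →
    ∀ σ : Assignment, SatSet σ ↑I →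
      (∀ j : Fin τ.length, j < i → IsDecision τ j → SatLit σ (τ.get j).1) →
      SatLit σ (τ.get i).1

/-- `τ^{≤d}`: the longest prefix of `τ` whose entries all have level `≤ d`. -/
def Trail.upTo (τ : Trail) (d : ℕ) : Trail := τ.takeWhile (fun e => e.2 ≤ d)

/-- An assignment satisfies (the literal of) every entry of a trail. -/
def SatTrail (σ : Assignment) (τ : Trail) : Prop := ∀ e ∈ τ, SatLit σ e.1

/-- `Γ →^d Δ` relative to `τ`. -/
def ImpliesAt (τ : Trail) (d : ℕ) (Γ Δ : Set Clause) : Prop :=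
  ∀ σ : Assignment, SatTrail σ (τ.upTo d) → SatSet σ Γ → SatSet σ Δ

/-- `Γ ↔^d Δ` relative to `τ`. -/
def EquivAt (τ : Trail) (d : ℕ) (Γ Δ : Set Clause) : Prop :=
  ImpliesAt τ d Γ Δ ∧ ImpliesAt τ d Δ Γ

/-- `α^{≤d}`: literals of `α` whose negation is not the literal of any entry of `τ^{≤d}`. -/
def Clause.upTo (τ : Trail) (d : ℕ) (α : Clause) : Clause :=
  α.filter (fun l => ∀ e ∈ τ.upTo d, e.1 ≠ Lit.neg l)

/-- `α` d-subsumes `β` (relative to `τ`). -/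
def SubsumesAt (τ : Trail) (d : ℕ) (α β : Clause) : Prop :=
  Clause.upTo τ d α ⊆ Clause.upTo τ d β

/-- `α` min-k-subsumes `β` (relative to `τ`). -/
def MinSubsumesAt (τ : Trail) (k : ℕ) (α β : Clause) : Prop :=
  SubsumesAt τ k α β ∧ ∀ d' < k, ¬ SubsumesAt τ d' α β

/-- `α` and `β` are resolvable on `x`. -/
def Resolvable (α β : Clause) (x : Var) : Prop := (x, true) ∈ α ∧ (x, false) ∈ β

/-- The resolveOn `α ⊗ₓ β`. -/
def resolveOn (α β : Clause) (x : Var) : Clause := α.erase (x, true) ∪ β.erase (x, false)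

/-- A clause state: groups `Dᵢ` (meaningful for `i ≤ n`), temporary clauses `D∞`,
and stashed groups `Sᵢ^q` (meaningful for `q < i ≤ n`). -/
structure ClauseState where
  D : ℕ → Set Clause
  Dinf : Set Clause
  Stash : ℕ → ℕ → Set Clause

/-- `Sᵢ := ⋃_{q<i} Sᵢ^q`. -/
def ClauseState.Sl (st : ClauseState) (i : ℕ) : Set Clause :=
  {α | ∃ q < i, α ∈ st.Stash i q}

/-- `S := ⋃_{1≤i≤n} Sᵢ`. -/
def ClauseState.Sall (st : ClauseState) (n : ℕ) : Set Clause :=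
  {α | ∃ i, 1 ≤ i ∧ i ≤ n ∧ α ∈ st.Sl i}

/-- `S⁰ := ⋃_{0<i≤n} Sᵢ^0`. -/
def ClauseState.S0 (st : ClauseState) (n : ℕ) : Set Clause :=
  {α | ∃ i, 0 < i ∧ i ≤ n ∧ α ∈ st.Stash i 0}

/-- The pervasive clauses `P := D₀ ∪ S⁰`. -/
def ClauseState.P (st : ClauseState) (n : ℕ) : Set Clause := st.D 0 ∪ st.S0 n

/-- The active-non-temporary clauses `N := ⋃_{0≤i≤n} Dᵢ`. -/
def ClauseState.N (st : ClauseState) (n : ℕ) : Set Clause := {α | ∃ i ≤ n, α ∈ st.D i}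

/-- The active clauses `A := N ∪ D∞`. -/
def ClauseState.A (st : ClauseState) (n : ℕ) : Set Clause := st.N n ∪ st.Dinf

/-- Inv1 (input-equivalence): `I ↔⁰ P`. -/
def Inv1 (I : Finset Clause) (τ : Trail) (st : ClauseState) (n : ℕ) : Prop :=
  EquivAt τ 0 ↑I (st.P n)

/-- Inv2 (correctness): `N ↔ⁿ P`. -/
def Inv2 (τ : Trail) (st : ClauseState) (n : ℕ) : Prop :=
  EquivAt τ n (st.N n) (st.P n)

/-- The representation condition on a clause `α` stashed at level `i`. -/
def Represented (τ : Trail) (st : ClauseState) (n i : ℕ) (α : Clause) : Prop :=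
  (∃ r ≤ i, ∃ β ∈ st.D r, ImpliesAt τ i {β} {α}) ∨
  (∃ r ≤ i, ∃ j, i < j ∧ j ≤ n ∧ ∃ β ∈ st.Stash j r, ImpliesAt τ i {β} {α}) ∨
  ImpliesAt τ i ∅ {α}

/-- Inv3 (representation). -/
def Inv3 (τ : Trail) (st : ClauseState) (n : ℕ) : Prop :=
  ∀ i, 1 ≤ i → i ≤ n → ∀ α ∈ st.Sl i, Represented τ st n i α

/-- Inv4 (closure): every active or stashed clause is 0-implied by `P`. -/
def Inv4 (τ : Trail) (st : ClauseState) (n : ℕ) : Prop :=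
  ∀ γ ∈ st.A n ∪ st.Sall n, ImpliesAt τ 0 (st.P n) {γ}

/-- All four BI invariants. -/
def Invs (I : Finset Clause) (τ : Trail) (st : ClauseState) (n : ℕ) : Prop :=
  Inv1 I τ st n ∧ Inv2 τ st n ∧ Inv3 τ st n ∧ Inv4 τ st n

lemma mem_upTo_mono {d d' : ℕ} (h : d ≤ d') :
    ∀ (τ : Trail), ∀ e ∈ τ.upTo d, e ∈ τ.upTo d'
  | [] => by simp [Trail.upTo]
  | a :: t => by
    intro e he
    by_cases ha : a.2 ≤ d
    · have ha' : a.2 ≤ d' := le_trans ha h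
      simp only [Trail.upTo, List.takeWhile_cons, decide_eq_true_eq, if_pos ha, if_pos ha',
        List.mem_cons] at he ⊢
      rcases he with rfl | he
      · exact Or.inl rfl
      · exact Or.inr (mem_upTo_mono h t e he)
    · simp only [Trail.upTo, List.takeWhile_cons, decide_eq_true_eq, if_neg ha,
        List.not_mem_nil] at he

lemma satTrail_mono {σ : Assignment} {τ : Trail} {d d' : ℕ} (h : d ≤ d')
    (hs : SatTrail σ (τ.upTo d')) : SatTrail σ (τ.upTo d) :=
  fun e he => hs e (mem_upTo_mono h τ e he)

lemma impliesAt_mono {τ : Trail} {Γ Δ : Set Clause} {d d' : ℕ} (h : d ≤ d')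
    (hi : ImpliesAt τ d Γ Δ) : ImpliesAt τ d' Γ Δ :=
  fun σ hs hΓ => hi σ (satTrail_mono h hs) hΓ

lemma satSet_mono {σ : Assignment} {Γ Γ' : Set Clause} (h : Γ ⊆ Γ') (hs : SatSet σ Γ') :
    SatSet σ Γ := fun c hc => hs c (h hc)

lemma impliesAt_sub_left {τ : Trail} {d : ℕ} {Γ Γ' Δ : Set Clause} (h : Γ ⊆ Γ')
    (hi : ImpliesAt τ d Γ Δ) : ImpliesAt τ d Γ' Δ :=
  fun σ hs hΓ => hi σ hs (satSet_mono h hΓ)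

lemma impliesAt_of_subset {τ : Trail} {d : ℕ} {Γ Δ : Set Clause} (h : Δ ⊆ Γ) :
    ImpliesAt τ d Γ Δ := fun _ _ hΓ => satSet_mono h hΓ

lemma impliesAt_trans {τ : Trail} {d : ℕ} {Γ Δ E : Set Clause}
    (h1 : ImpliesAt τ d Γ Δ) (h2 : ImpliesAt τ d Δ E) : ImpliesAt τ d Γ E :=
  fun σ hs hΓ => h2 σ hs (h1 σ hs hΓ)

lemma impliesAt_forall {τ : Trail} {d : ℕ} {Γ Δ : Set Clause}
    (h : ∀ δ ∈ Δ, ImpliesAt τ d Γ {δ}) : ImpliesAt τ d Γ Δ :=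
  fun σ hs hΓ c hc => h c hc σ hs hΓ c rfl

/-- Key auxiliary fact: the active-non-temporary clauses `n`-imply every stashed clause. -/
lemma N_implies_stash (τ : Trail) (st : ClauseState) (n : ℕ) (h3 : Inv3 τ st n) :
    ∀ k i α, n - i ≤ k → 1 ≤ i → i ≤ n → α ∈ st.Sl i → ImpliesAt τ n (st.N n) {α} := by
  intro k
  induction k with
  | zero =>
    intro i α hk hi1 hin hα
    rcases h3 i hi1 hin α hα with ⟨r, hr, β, hβ, himp⟩ | ⟨r, hr, j', h1, h2, _, _, _⟩ | himp
    · exact impliesAt_trans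
        (impliesAt_of_subset (Set.singleton_subset_iff.mpr ⟨r, le_trans hr hin, hβ⟩))
        (impliesAt_mono hin himp)
    · omega
    · exact impliesAt_sub_left (Set.empty_subset _) (impliesAt_mono hin himp)
  | succ k ih =>
    intro i α hk hi1 hin hα
    rcases h3 i hi1 hin α hα with ⟨r, hr, β, hβ, himp⟩ |
      ⟨r, hr, j', h1, h2, β, hβ, himp⟩ | himp
    · exact impliesAt_trans
        (impliesAt_of_subset (Set.singleton_subset_iff.mpr ⟨r, le_trans hr hin, hβ⟩))
        (impliesAt_mono hin himp)
    · have hβSl : β ∈ st.Sl j' := ⟨r, lt_of_le_of_lt hr h1, hβ⟩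
      have hNβ : ImpliesAt τ n (st.N n) {β} := ih j' β (by omega) (by omega) h2 hβSl
      exact impliesAt_trans hNβ (impliesAt_mono hin himp)
    · exact impliesAt_sub_left (Set.empty_subset _) (impliesAt_mono hin himp)

/-- promotion of an active clause `γ` of rank `i` to a lower group `D_j`
(`j ≤ n`, `j < i`, where `i = ∞` for temporary clauses) preserves all BI invariants. -/
theorem stmt5 (I : Finset Clause) (τ : Trail) (hτ : IsTrail I τ)
    (st : ClauseState) (n : ℕ)
    (h1 : Inv1 I τ st n) (h3 : Inv3 τ st n) (h4 : Inv4 τ st n)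
    (γ : Clause) (j : ℕ) (hjn : j ≤ n)
    (st' : ClauseState) (hS : st'.Stash = st.Stash)
    (hcase :
      (∃ i, i ≤ n ∧ j < i ∧ γ ∈ st.D i ∧ st'.Dinf = st.Dinf ∧
        st'.D = fun q => if q = j then st.D j ∪ {γ}
                 else if q = i then st.D i \ {γ} else st.D q)
      ∨ (γ ∈ st.Dinf ∧ st'.Dinf = st.Dinf \ {γ} ∧
        st'.D = fun q => if q = j then st.D j ∪ {γ} else st.D q)) :
    Invs I τ st' n := by
  -- stashes unchanged
  have hSl : ∀ i, st'.Sl i = st.Sl i := by intro i; unfold ClauseState.Sl; rw [hS]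
  have hSall : st'.Sall n = st.Sall n := by
    unfold ClauseState.Sall; ext α; simp only [hSl]
  have hS0 : st'.S0 n = st.S0 n := by unfold ClauseState.S0; rw [hS]
  -- structural facts
  obtain ⟨hγA, hNsub, hA'sub, hD0⟩ :
      (γ ∈ st.A n ∪ st.Sall n) ∧ (st.N n ⊆ st'.N n) ∧ (st'.A n ⊆ st.A n) ∧
      (st'.D 0 = st.D 0 ∨ st'.D 0 = st.D 0 ∪ {γ}) := by
    rcases hcase with ⟨i0, hi0n, hji0, hγD, hDinf, hD⟩ | ⟨hγD, hDinf, hD⟩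
    · refine ⟨Or.inl (Or.inl ⟨i0, hi0n, hγD⟩), ?_, ?_, ?_⟩
      · rintro δ ⟨q, hq, hδ⟩
        by_cases hδγ : δ = γ
        · refine ⟨j, hjn, ?_⟩
          simp only [hD, if_pos rfl]
          exact Set.mem_union_right _ hδγ
        · by_cases hqj : q = j
          · refine ⟨j, hjn, ?_⟩
            simp only [hD, if_pos rfl]
            exact Set.mem_union_left _ (hqj ▸ hδ)
          · by_cases hqi : q = i0
            · refine ⟨q, hq, ?_⟩
              simp only [hD]
              rw [if_neg hqj, if_pos hqi]
              exact ⟨hqi ▸ hδ, hδγ⟩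
            · refine ⟨q, hq, ?_⟩
              simp only [hD]
              rw [if_neg hqj, if_neg hqi]
              exact hδ
      · rintro δ (⟨q, hq, hδ⟩ | hδ)
        · simp only [hD] at hδ
          by_cases hqj : q = j
          · rw [if_pos hqj] at hδ
            rcases hδ with hδ | hδ
            · exact Or.inl ⟨j, hjn, hδ⟩
            · exact Or.inl ⟨i0, hi0n, by rwa [show δ = γ from hδ]⟩
          · rw [if_neg hqj] at hδ
            by_cases hqi : q = i0
            · rw [if_pos hqi] at hδ
              exact Or.inl ⟨i0, hi0n, hδ.1⟩
            · rw [if_neg hqi] at hδ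
              exact Or.inl ⟨q, hq, hδ⟩
        · exact Or.inr (hDinf ▸ hδ)
      · by_cases hj0 : j = 0
        · right; simp only [hD]
          rw [if_pos hj0.symm, hj0]
        · left; simp only [hD]
          rw [if_neg (Ne.symm hj0), if_neg (show (0:ℕ) ≠ i0 by omega)]
    · refine ⟨Or.inl (Or.inr hγD), ?_, ?_, ?_⟩
      · rintro δ ⟨q, hq, hδ⟩
        refine ⟨q, hq, ?_⟩
        simp only [hD]
        by_cases hqj : q = j
        · rw [if_pos hqj]
          exact Set.mem_union_left _ (hqj ▸ hδ)
        · rw [if_neg hqj]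
          exact hδ
      · rintro δ (⟨q, hq, hδ⟩ | hδ)
        · simp only [hD] at hδ
          by_cases hqj : q = j
          · rw [if_pos hqj] at hδ
            rcases hδ with hδ | hδ
            · exact Or.inl ⟨j, hjn, hδ⟩
            · exact Or.inr (by rwa [show δ = γ from hδ])
          · rw [if_neg hqj] at hδ
            exact Or.inl ⟨q, hq, hδ⟩
        · rw [hDinf] at hδ
          exact Or.inr hδ.1
      · by_cases hj0 : j = 0
        · right; simp only [hD]
          rw [if_pos hj0.symm, hj0]
        · left; simp only [hD]
          rw [if_neg (Ne.symm hj0)]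
  -- pervasive clauses
  have hP'eq : st'.P n = st.P n ∨ st'.P n = st.P n ∪ {γ} := by
    unfold ClauseState.P; rw [hS0]
    rcases hD0 with h | h
    · left; rw [h]
    · right; rw [h, Set.union_right_comm]
  have hPγ : ImpliesAt τ 0 (st.P n) {γ} := h4 γ hγA
  have hPsub : st.P n ⊆ st'.P n := by
    rcases hP'eq with h | h
    · rw [h]
    · rw [h]; exact Set.subset_union_left
  have hPP' : ImpliesAt τ 0 (st.P n) (st'.P n) := by
    rcases hP'eq with h | h
    · rw [h]; exact impliesAt_of_subset (le_refl _)
    · rw [h]; intro σ hs hΓ c hc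
      rcases hc with hc | hc
      · exact hΓ c hc
      · exact hc ▸ hPγ σ hs hΓ γ rfl
  have hP'P : ImpliesAt τ 0 (st'.P n) (st.P n) := impliesAt_of_subset hPsub
  -- Inv1
  have hInv1 : Inv1 I τ st' n :=
    ⟨impliesAt_trans h1.1 hPP', impliesAt_trans hP'P h1.2⟩
  -- Inv4
  have hInv4 : Inv4 τ st' n := by
    intro δ hδ
    have hδ' : δ ∈ st.A n ∪ st.Sall n := by
      rcases hδ with hδ | hδ
      · exact Or.inl (hA'sub hδ)
      · exact Or.inr (hSall ▸ hδ)
    exact impliesAt_sub_left hPsub (h4 δ hδ')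
  -- Inv3
  have hInv3 : Inv3 τ st' n := by
    intro i hi1 hin α hα
    rw [hSl] at hα
    rcases h3 i hi1 hin α hα with ⟨r, hr, β, hβ, himp⟩ |
      ⟨r, hr, j', h1', h2', β, hβ, himp⟩ | himp
    · rcases hcase with ⟨i0, hi0n, hji0, hγD, hDinf, hD⟩ | ⟨hγD, hDinf, hD⟩
      · by_cases hβγ : r = i0 ∧ β = γ
        · refine Or.inl ⟨j, ?_, γ, ?_, hβγ.2 ▸ himp⟩
          · have := hβγ.1; omega
          · simp only [hD, if_pos rfl]
            exact Set.mem_union_right _ rfl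
        · refine Or.inl ⟨r, hr, β, ?_, himp⟩
          simp only [hD]
          by_cases hrj : r = j
          · rw [if_pos hrj]
            exact Set.mem_union_left _ (hrj ▸ hβ)
          · rw [if_neg hrj]
            by_cases hri : r = i0
            · rw [if_pos hri]
              exact ⟨hri ▸ hβ, fun h => hβγ ⟨hri, h⟩⟩
            · rw [if_neg hri]
              exact hβ
      · refine Or.inl ⟨r, hr, β, ?_, himp⟩
        simp only [hD]
        by_cases hrj : r = j
        · rw [if_pos hrj]
          exact Set.mem_union_left _ (hrj ▸ hβ)
        · rw [if_neg hrj]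
          exact hβ
    · exact Or.inr (Or.inl ⟨r, hr, j', h1', h2', β, by rw [hS]; exact hβ, himp⟩)
    · exact Or.inr (Or.inr himp)
  -- Inv2
  have hInv2 : Inv2 τ st' n := by
    constructor
    · apply impliesAt_forall
      intro δ hδ
      rcases hδ with hδ | hδ
      · exact impliesAt_of_subset (Set.singleton_subset_iff.mpr ⟨0, Nat.zero_le n, hδ⟩)
      · rw [hS0] at hδ
        obtain ⟨i, hi0, hin, hδS⟩ := hδ
        have hst : ImpliesAt τ n (st.N n) {δ} :=
          N_implies_stash τ st n h3 (n - i) i δ le_rfl hi0 hin ⟨0, hi0, hδS⟩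
        exact impliesAt_sub_left hNsub hst
    · apply impliesAt_forall
      intro δ hδ
      have hδA : δ ∈ st.A n ∪ st.Sall n := Or.inl (hA'sub (Or.inl hδ))
      exact impliesAt_mono (Nat.zero_le n) (impliesAt_sub_left hPsub (h4 δ hδA))
  exact ⟨hInv1, hInv2, hInv3, hInv4⟩
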